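/- Let q be odd and k ≥ 1. Then (F_q[S]/(S^k))^× is the internal direct product of the subgroup H_k of even polynomials (those f with f(−S) = f(S) mod S^k) and the subgroup S¹_k of norm-one, constant-term-one elements. -/

import Mathlib

/-!
Write `g = c * x` with `c` a constant and `x ≡ 1 mod S`. Units with constant term `1` are
killed by `p ^ k`, `p = char F_q` odd, so `v = x σ(x)` has a σ-fixed square root `r` (a power of
`v`); then `h = c r` is even and `s = h⁻¹ g` has norm one. Conversely an even element `t` of norm
one satisfies `t = σ t = t⁻¹`, so `t ^ 2 = 1`, and having odd order it is `1`.
-/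

open Polynomial

set_option maxRecDepth 4000

/-- The Galois-type involution `σ : S ↦ -S` on `F_q[S]/(S^k)`. -/
noncomputable def sigmaMap (Fq : Type) [Field Fq] (k : ℕ) :
    AdjoinRoot (X ^ k : Polynomial Fq) →+* AdjoinRoot (X ^ k : Polynomial Fq) :=
  AdjoinRoot.lift (AdjoinRoot.of _) (-(AdjoinRoot.root _)) (by
    have h : (AdjoinRoot.root (X ^ k : Polynomial Fq)) ^ k = 0 := by
      have := AdjoinRoot.eval₂_root (X ^ k : Polynomial Fq)
      simpa using this
    rw [Polynomial.eval₂_X_pow, neg_pow, h, mul_zero])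

/-- Evaluation at `0` (the constant term), as a ring homomorphism `F_q[S]/(S^k) → F_q`. -/
noncomputable def ev0 (Fq : Type) [Field Fq] (k : ℕ) (hk : k ≠ 0) :
    AdjoinRoot (X ^ k : Polynomial Fq) →+* Fq :=
  AdjoinRoot.lift (RingHom.id Fq) 0 (by rw [Polynomial.eval₂_X_pow, zero_pow hk])

section Involution

variable {G M : Type*} [CommGroup G] [Group M] {σ : G →* G} {χ : G →* M} {H S : Subgroup G}

theorem disjoint_fixed_norm_one {n : ℕ} (hn : Odd n) (hexp : ∀ u, χ u = 1 → u ^ n = 1)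
    (hH : ∀ g, g ∈ H ↔ σ g = g) (hS : ∀ g, g ∈ S ↔ χ g = 1 ∧ g * σ g = 1) :
    Disjoint H S := by
  rw [Subgroup.disjoint_def]
  intro t htH htS
  obtain ⟨hχt, hnorm⟩ := (hS t).mp htS
  rw [(hH t).mp htH, ← sq] at hnorm
  exact (pow_eq_one_iff_of_coprime (Nat.coprime_two_left.mpr hn)).mp ⟨hnorm, hexp t hχt⟩

theorem exists_fixed_mul_norm_one (hσ : ∀ g, σ (σ g) = g) (hχσ : ∀ g, χ (σ g) = χ g)
    {n : ℕ} (hn : Odd n) (hexp : ∀ u, χ u = 1 → u ^ n = 1)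
    (hsec : ∀ g, ∃ c, σ c = c ∧ χ c = χ g)
    (hH : ∀ g, g ∈ H ↔ σ g = g) (hS : ∀ g, g ∈ S ↔ χ g = 1 ∧ g * σ g = 1) (g : G) :
    ∃ h ∈ H, ∃ s ∈ S, h * s = g := by
  obtain ⟨c, hσc, hχc⟩ := hsec g
  obtain ⟨j, rfl⟩ := hn
  set x := c⁻¹ * g
  set v := x * σ x
  have hχx : χ x = 1 := by simp [x, hχc]
  have hχv : χ v = 1 := by simp [v, hχσ, hχx]
  have hσv : σ v = v := by simp [v, hσ, mul_comm]
  -- `v` has odd order, so `v ^ (j + 1)` is a square root of it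
  set r := v ^ (j + 1)
  have hr : r ^ 2 = v := by
    rw [← pow_mul, show (j + 1) * 2 = 2 * j + 1 + 1 by ring, pow_succ, hexp v hχv, one_mul]
  refine ⟨c * r, (hH _).mpr (by simp [r, hσc, hσv]), (c * r)⁻¹ * g, (hS _).mpr ⟨?_, ?_⟩,
    mul_inv_cancel_left _ _⟩
  · simp [r, hχc, hχv]
  · have hσr : σ r = r := by simp [r, hσv]
    calc (c * r)⁻¹ * g * σ ((c * r)⁻¹ * g) = (r ^ 2)⁻¹ * v := by
          simp only [v, x, map_mul, map_inv, hσc, hσr]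
          simp only [mul_inv_rev, sq, mul_assoc, mul_left_comm]
      _ = 1 := by rw [hr, inv_mul_cancel]

theorem isComplement'_fixed_norm_one (hσ : ∀ g, σ (σ g) = g) (hχσ : ∀ g, χ (σ g) = χ g)
    {n : ℕ} (hn : Odd n) (hexp : ∀ u, χ u = 1 → u ^ n = 1)
    (hsec : ∀ g, ∃ c, σ c = c ∧ χ c = χ g)
    (hH : ∀ g, g ∈ H ↔ σ g = g) (hS : ∀ g, g ∈ S ↔ χ g = 1 ∧ g * σ g = 1) :
    H.IsComplement' S := by
  refine Subgroup.isComplement'_of_disjoint_and_mul_eq_univ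
    (disjoint_fixed_norm_one hn hexp hH hS) (Set.eq_univ_of_forall fun g => ?_)
  obtain ⟨h, hh, s, hs, rfl⟩ := exists_fixed_mul_norm_one hσ hχσ hn hexp hsec hH hS g
  exact Set.mul_mem_mul hh hs

end Involution

theorem one_add_pow_char_pow_eq_one {R : Type*} [CommRing R] (p : ℕ) [Fact p.Prime] [CharP R p]
    {x : R} {k : ℕ} (hx : x ^ k = 0) : (1 + x) ^ p ^ k = 1 := by
  have hk : k ≤ p ^ k := (Nat.lt_pow_self (Fact.out : p.Prime).one_lt).le
  rw [add_pow_char_pow, one_pow, pow_eq_zero_of_le hk hx, add_zero]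

theorem odd_ringChar_of_odd_card {F : Type*} [Field F] [Fintype F] (hq : Odd (Fintype.card F)) :
    Odd (ringChar F) :=
  (CharP.char_is_prime F _).odd_of_ne_two fun h2 => by
    have := FiniteField.even_card_iff_char_two.mp h2
    rw [Nat.odd_iff] at hq
    omega

section TruncatedPolynomial

variable (Fq : Type) [Field Fq] (k : ℕ)

local notation "𝔸" => AdjoinRoot (X ^ k : Polynomial Fq)

@[simp]
theorem sigmaMap_of (a : Fq) : sigmaMap Fq k (AdjoinRoot.of _ a) = AdjoinRoot.of _ a :=
  AdjoinRoot.lift_of _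

@[simp]
theorem sigmaMap_root : sigmaMap Fq k (AdjoinRoot.root _) = -AdjoinRoot.root _ :=
  AdjoinRoot.lift_root _

theorem sigmaMap_sigmaMap (x : 𝔸) : sigmaMap Fq k (sigmaMap Fq k x) = x := by
  suffices (sigmaMap Fq k).comp (sigmaMap Fq k) = RingHom.id 𝔸 from RingHom.congr_fun this x
  ext <;> simp

variable {k} (hk : k ≠ 0)

@[simp]
theorem ev0_of (a : Fq) : ev0 Fq k hk (AdjoinRoot.of _ a) = a :=
  AdjoinRoot.lift_of _

@[simp]
theorem ev0_root : ev0 Fq k hk (AdjoinRoot.root _) = 0 :=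
  AdjoinRoot.lift_root _

theorem ev0_sigmaMap (x : 𝔸) : ev0 Fq k hk (sigmaMap Fq k x) = ev0 Fq k hk x := by
  suffices (ev0 Fq k hk).comp (sigmaMap Fq k) = ev0 Fq k hk from RingHom.congr_fun this x
  ext <;> simp

theorem pow_eq_zero_of_ev0_eq_zero {x : 𝔸} (hx : ev0 Fq k hk x = 0) : x ^ k = 0 := by
  induction x using AdjoinRoot.induction_on with
  | ih g =>
    rw [show ev0 Fq k hk (AdjoinRoot.mk _ g) = g.eval 0 from AdjoinRoot.lift_mk _ g,
      ← coeff_zero_eq_eval_zero] at hx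
    obtain ⟨h, rfl⟩ := X_dvd_iff.mpr hx
    rw [← map_pow, AdjoinRoot.mk_eq_zero, mul_pow]
    exact dvd_mul_right _ _

theorem pow_char_pow_eq_one_of_ev0_eq_one (p : ℕ) [Fact p.Prime] [CharP Fq p] {x : 𝔸}
    (hx : ev0 Fq k hk x = 1) : x ^ p ^ k = 1 := by
  have : CharP 𝔸 p :=
    charP_of_injective_ringHom (Function.LeftInverse.injective (ev0_of Fq hk)) _
  rw [← add_sub_cancel 1 x]
  exact one_add_pow_char_pow_eq_one _ (pow_eq_zero_of_ev0_eq_zero Fq hk (by simp [hx]))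

end TruncatedPolynomial

/-- For `q` odd and `k ≥ 1`, `(F_q[S]/(S^k))^×` is the internal direct product of the
subgroup `H_k` of even polynomials and the subgroup `S¹_k` of norm-one,
constant-term-one elements: every unit factors uniquely as a product of one element
from each. -/
theorem stmt_6 (Fq : Type) [Field Fq] [Fintype Fq] (hq : Odd (Fintype.card Fq))
    (k : ℕ) (hk : 1 ≤ k)
    (Hev Sone : Subgroup (AdjoinRoot (X ^ k : Polynomial Fq))ˣ)
    (hHev : ∀ f : (AdjoinRoot (X ^ k : Polynomial Fq))ˣ,
      f ∈ Hev ↔ sigmaMap Fq k (f : AdjoinRoot (X ^ k : Polynomial Fq)) =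
        (f : AdjoinRoot (X ^ k : Polynomial Fq)))
    (hSone : ∀ f : (AdjoinRoot (X ^ k : Polynomial Fq))ˣ,
      f ∈ Sone ↔
        ev0 Fq k (Nat.one_le_iff_ne_zero.mp hk) (f : AdjoinRoot (X ^ k : Polynomial Fq)) = 1 ∧
        (f : AdjoinRoot (X ^ k : Polynomial Fq)) *
          sigmaMap Fq k (f : AdjoinRoot (X ^ k : Polynomial Fq)) = 1) :
    ∀ g : (AdjoinRoot (X ^ k : Polynomial Fq))ˣ,
      ∃! p : Hev × Sone, (p.1 : (AdjoinRoot (X ^ k : Polynomial Fq))ˣ) * (p.2 : (AdjoinRoot (X ^ k : Polynomial Fq))ˣ) = g := by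
  have hk₀ : k ≠ 0 := by omega
  let σ := Units.map (sigmaMap Fq k).toMonoidHom
  let χ := Units.map (ev0 Fq k hk₀).toMonoidHom
  have : Fact (ringChar Fq).Prime := ⟨CharP.char_is_prime Fq _⟩
  have hσσ : ∀ g, σ (σ g) = g := fun g => Units.ext (sigmaMap_sigmaMap Fq k g)
  have hχσ : ∀ g, χ (σ g) = χ g := fun g => Units.ext (ev0_sigmaMap Fq hk₀ g)
  have hexp : ∀ u, χ u = 1 → u ^ ringChar Fq ^ k = 1 := fun u hu =>
    Units.ext (pow_char_pow_eq_one_of_ev0_eq_one Fq hk₀ _ (congrArg Units.val hu))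
  have hconst : ∀ g, ∃ c, σ c = c ∧ χ c = χ g := fun g =>
    ⟨Units.map (AdjoinRoot.of _).toMonoidHom (χ g), Units.ext (by simp [σ]),
      Units.ext (by simp [χ])⟩
  refine (isComplement'_fixed_norm_one hσσ hχσ (odd_ringChar_of_odd_card hq).pow hexp hconst
    (fun f => ?_) (fun f => ?_)).existsUnique
  · rw [hHev, Units.ext_iff]; rfl
  · rw [hSone, Units.ext_iff, Units.ext_iff]; rfl
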